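/- arXiv:1011.1194 — 2 statements merged into one kernel-verified Lean document; each statement's English description precedes it below -/
import Mathlib

section
/- Under hypotheses (i)–(iv) below, the operator Θ satisfies, for every k ∈ ℤ, the identity Θ_k = (-1)^{kn} · d_k ∘ Φ_{n-1-k} ∘ Φ_k (this is the paper's equation (5.2): Θ = (-1)^{kn} d_∂ Φ² on Ω^k(∂M)). -/
/-- Cast between components of a graded family of modules along an index equality. -/
noncomputable def vcast {V : ℤ → Type*} [∀ k, AddCommGroup (V k)] [∀ k, Module ℝ (V k)]
    {a b : ℤ} (h : a = b) : V a →ₗ[ℝ] V b := by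
  subst h; exact LinearMap.id

section helpers

variable {V : ℤ → Type*} [∀ k, AddCommGroup (V k)] [∀ k, Module ℝ (V k)]

lemma vcast_vcast {a b c : ℤ} (h1 : a = b) (h2 : b = c) (x : V a) :
    vcast (V := V) h2 (vcast (V := V) h1 x) = vcast (V := V) (h1.trans h2) x := by
  subst h1; subst h2; rfl

lemma vcast_nat (F : ℤ → ℤ) (f : ∀ k : ℤ, V k →ₗ[ℝ] V (F k)) {a b : ℤ} (h : a = b)
    (x : V a) :
    f b (vcast (V := V) h x) = vcast (V := V) (congrArg F h) (f a x) := by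
  subst h; rfl

lemma neg_one_zpow_two_mul (m : ℤ) : ((-1 : ℝ)) ^ (2 * m) = 1 := by
  rw [zpow_mul]
  norm_num

end helpers

/-- Paper's equation (5.2): Θ = (-1)^{kn} d_∂ Φ² on Ω^k(∂M). -/
theorem theta_eq_d_phi_sq (n : ℤ) (hn : 2 ≤ n)
    (V : ℤ → Type*) [∀ k, AddCommGroup (V k)] [∀ k, Module ℝ (V k)]
    (d : ∀ k : ℤ, V k →ₗ[ℝ] V (k + 1))
    (Φ : ∀ k : ℤ, V k →ₗ[ℝ] V (n - 1 - k))
    (Ψ : ∀ k : ℤ, V k →ₗ[ℝ] V (k - 1))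
    (hd : ∀ k : ℤ, d (k + 1) ∘ₗ d k = 0)
    (h1 : ∀ k : ℤ,
      vcast (V := V) (show n - 1 - (k - 1) = n - 1 - k + 1 by ring) ∘ₗ Φ (k - 1) ∘ₗ Ψ k
        = ((-1 : ℝ) ^ k) • (d (n - 1 - k) ∘ₗ Φ k))
    (h2 : ∀ k : ℤ, Ψ (k - 1) ∘ₗ Ψ k = 0)
    (h3 : ∀ k : ℤ,
      Ψ (n - 1 - k) ∘ₗ Φ k
        = ((-1 : ℝ) ^ (k + 1)) •
            (vcast (V := V) (show n - 1 - (k + 1) = n - 1 - k - 1 by ring) ∘ₗ Φ (k + 1) ∘ₗ d k))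
    (h4 : ∀ k : ℤ,
      vcast (V := V) (show n - 1 - (n - 1 - k) = k by ring) ∘ₗ Φ (n - 1 - k) ∘ₗ Φ k
        = ((-1 : ℝ) ^ (k * n)) •
            (vcast (V := V) (show k - 1 + 1 = k by ring) ∘ₗ d (k - 1) ∘ₗ Ψ k
              + vcast (V := V) (show k + 1 - 1 = k by ring) ∘ₗ Ψ (k + 1) ∘ₗ d k))
    (Θ : ∀ k : ℤ, V k →ₗ[ℝ] V (k + 1))
    (hΘ : ∀ k : ℤ,
      Θ k = ((-1 : ℝ) ^ ((k + 1) * (n - 1))) •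
        (vcast (V := V) (show n - 1 - (n - 2 - k) = k + 1 by ring) ∘ₗ Φ (n - 2 - k) ∘ₗ
          vcast (V := V) (show n - 1 - k - 1 = n - 2 - k by ring) ∘ₗ Ψ (n - 1 - k) ∘ₗ Φ k)) :
    ∀ k : ℤ,
      Θ k = ((-1 : ℝ) ^ (k * n)) •
        (d k ∘ₗ vcast (V := V) (show n - 1 - (n - 1 - k) = k by ring) ∘ₗ
          Φ (n - 1 - k) ∘ₗ Φ k) := by
  intro k
  -- pointwise versions of hypotheses
  have pd : ∀ (m : ℤ) (x : V m), d (m + 1) (d m x) = 0 := by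
    intro m x
    have := LinearMap.congr_fun (hd m) x
    simpa using this
  have p3 : ∀ x : V k,
      Ψ (n - 1 - k) (Φ k x)
        = ((-1 : ℝ) ^ (k + 1)) •
            vcast (V := V) (show n - 1 - (k + 1) = n - 1 - k - 1 by ring)
              (Φ (k + 1) (d k x)) := by
    intro x
    have := LinearMap.congr_fun (h3 k) x
    simpa using this
  have p4 : ∀ (m : ℤ) (x : V m),
      vcast (V := V) (show n - 1 - (n - 1 - m) = m by ring) (Φ (n - 1 - m) (Φ m x))
        = ((-1 : ℝ) ^ (m * n)) •
            (vcast (V := V) (show m - 1 + 1 = m by ring) (d (m - 1) (Ψ m x))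
              + vcast (V := V) (show m + 1 - 1 = m by ring) (Ψ (m + 1) (d m x))) := by
    intro m x
    have := LinearMap.congr_fun (h4 m) x
    simpa using this
  apply LinearMap.ext
  intro x
  -- Compute the left-hand side
  have hL : Θ k x
      = d k (vcast (V := V) (show k + 1 - 1 = k by ring) (Ψ (k + 1) (d k x))) := by
    rw [hΘ k]
    simp only [LinearMap.smul_apply, LinearMap.coe_comp, Function.comp_apply]
    rw [p3 x]
    simp only [map_smul, smul_smul]
    rw [vcast_vcast (V := V)
        (show n - 1 - (k + 1) = n - 1 - k - 1 by ring)
        (show n - 1 - k - 1 = n - 2 - k by ring)]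
    rw [vcast_nat (V := V) (fun j => n - 1 - j) Φ
        (show n - 1 - (k + 1) = n - 2 - k by ring)]
    rw [vcast_vcast (V := V)
        (congrArg (fun j => n - 1 - j) (show n - 1 - (k + 1) = n - 2 - k by ring))
        (show n - 1 - (n - 2 - k) = k + 1 by ring)]
    rw [p4 (k + 1) (d k x)]
    rw [pd k x]
    simp only [map_zero, add_zero, smul_smul]
    rw [show vcast (V := V) (show k + 1 - 1 + 1 = k + 1 by ring)
          (d (k + 1 - 1) (Ψ (k + 1) (d k x)))
        = d k (vcast (V := V) (show k + 1 - 1 = k by ring) (Ψ (k + 1) (d k x))) from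
      (vcast_nat (V := V) (fun j => j + 1) d (show k + 1 - 1 = k by ring) _).symm]
    rw [show ((-1 : ℝ) ^ ((k + 1) * (n - 1)) * (-1 : ℝ) ^ (k + 1) * (-1 : ℝ) ^ ((k + 1) * n))
        = 1 by
      rw [← zpow_add₀ (by norm_num : (-1 : ℝ) ≠ 0),
        ← zpow_add₀ (by norm_num : (-1 : ℝ) ≠ 0),
        show (k + 1) * (n - 1) + (k + 1) + (k + 1) * n = 2 * ((k + 1) * n) by ring,
        neg_one_zpow_two_mul]]
    rw [one_smul]
  -- Compute the right-hand side
  have hR : (((-1 : ℝ) ^ (k * n)) •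
        (d k ∘ₗ vcast (V := V) (show n - 1 - (n - 1 - k) = k by ring) ∘ₗ
          Φ (n - 1 - k) ∘ₗ Φ k)) x
      = d k (vcast (V := V) (show k + 1 - 1 = k by ring) (Ψ (k + 1) (d k x))) := by
    simp only [LinearMap.smul_apply, LinearMap.coe_comp, Function.comp_apply]
    rw [p4 k x]
    simp only [map_smul, map_add, smul_smul]
    rw [vcast_nat (V := V) (fun j => j + 1) d (show k - 1 + 1 = k by ring)]
    rw [pd (k - 1) (Ψ k x)]
    simp only [map_zero, zero_add]
    rw [show ((-1 : ℝ) ^ (k * n) * (-1 : ℝ) ^ (k * n)) = 1 by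
      rw [← zpow_add₀ (by norm_num : (-1 : ℝ) ≠ 0),
        show k * n + k * n = 2 * (k * n) by ring, neg_one_zpow_two_mul]]
    rw [one_smul]
  rw [hL, hR]
end

section
/- Under hypotheses (i)–(iv) below, the operator Θ satisfies, for every k ∈ ℤ, the identity Θ_k = d_k ∘ Ψ_{k+1} ∘ d_k (this is the paper's equation (5.4): Θ = d_∂ Ψ d_∂ on Ω^k(∂M)). -/
section helpers
variable {V : ℤ → Type*} [∀ k, AddCommGroup (V k)] [∀ k, Module ℝ (V k)]

lemma vcast_natural (f : ℤ → ℤ) (F : ∀ k, V k →ₗ[ℝ] V (f k)) {a b : ℤ} (h : a = b) (x : V a) :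
    F b (vcast (V := V) h x) = vcast (V := V) (congrArg f h) (F a x) := by
  subst h; rfl

end helpers

/-- Paper's equation (5.4): Θ = d_∂ Ψ d_∂ on Ω^k(∂M). -/
theorem theta_eq_d_psi_d (n : ℤ) (hn : 2 ≤ n)
    (V : ℤ → Type*) [∀ k, AddCommGroup (V k)] [∀ k, Module ℝ (V k)]
    (d : ∀ k : ℤ, V k →ₗ[ℝ] V (k + 1))
    (Φ : ∀ k : ℤ, V k →ₗ[ℝ] V (n - 1 - k))
    (Ψ : ∀ k : ℤ, V k →ₗ[ℝ] V (k - 1))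
    (hd : ∀ k : ℤ, d (k + 1) ∘ₗ d k = 0)
    (h1 : ∀ k : ℤ,
      vcast (V := V) (show n - 1 - (k - 1) = n - 1 - k + 1 by ring) ∘ₗ Φ (k - 1) ∘ₗ Ψ k
        = ((-1 : ℝ) ^ k) • (d (n - 1 - k) ∘ₗ Φ k))
    (h2 : ∀ k : ℤ, Ψ (k - 1) ∘ₗ Ψ k = 0)
    (h3 : ∀ k : ℤ,
      Ψ (n - 1 - k) ∘ₗ Φ k
        = ((-1 : ℝ) ^ (k + 1)) •
            (vcast (V := V) (show n - 1 - (k + 1) = n - 1 - k - 1 by ring) ∘ₗ Φ (k + 1) ∘ₗ d k))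
    (h4 : ∀ k : ℤ,
      vcast (V := V) (show n - 1 - (n - 1 - k) = k by ring) ∘ₗ Φ (n - 1 - k) ∘ₗ Φ k
        = ((-1 : ℝ) ^ (k * n)) •
            (vcast (V := V) (show k - 1 + 1 = k by ring) ∘ₗ d (k - 1) ∘ₗ Ψ k
              + vcast (V := V) (show k + 1 - 1 = k by ring) ∘ₗ Ψ (k + 1) ∘ₗ d k))
    (Θ : ∀ k : ℤ, V k →ₗ[ℝ] V (k + 1))
    (hΘ : ∀ k : ℤ,
      Θ k = ((-1 : ℝ) ^ ((k + 1) * (n - 1))) •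
        (vcast (V := V) (show n - 1 - (n - 2 - k) = k + 1 by ring) ∘ₗ Φ (n - 2 - k) ∘ₗ
          vcast (V := V) (show n - 1 - k - 1 = n - 2 - k by ring) ∘ₗ Ψ (n - 1 - k) ∘ₗ Φ k)) :
    ∀ k : ℤ,
      Θ k = d k ∘ₗ vcast (V := V) (show k + 1 - 1 = k by ring) ∘ₗ Ψ (k + 1) ∘ₗ d k := by
  intro k
  ext x
  rw [hΘ k]
  simp only [LinearMap.smul_apply, LinearMap.comp_apply]
  -- rewrite Ψ (n-1-k) (Φ k x) via h3
  have h3x := LinearMap.congr_fun (h3 k) x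
  simp only [LinearMap.smul_apply, LinearMap.comp_apply] at h3x
  rw [h3x, map_smul, map_smul, map_smul, smul_smul]
  -- collapse the two vcasts
  rw [vcast_vcast (V := V) (show n - 1 - (k + 1) = n - 1 - k - 1 by ring)
      (show n - 1 - k - 1 = n - 2 - k by ring)]
  -- move vcast past Φ
  rw [vcast_natural (V := V) (fun j => n - 1 - j) Φ
      (show n - 1 - (k + 1) = n - 2 - k by ring)]
  rw [vcast_vcast (V := V) _ (show n - 1 - (n - 2 - k) = k + 1 by ring)]
  -- apply h4 at k+1
  have h4x := LinearMap.congr_fun (h4 (k + 1)) (d k x)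
  simp only [LinearMap.smul_apply, LinearMap.comp_apply, LinearMap.add_apply] at h4x
  rw [h4x]
  -- second summand vanishes
  have hdx : d (k + 1) (d k x) = 0 := LinearMap.congr_fun (hd k) x
  rw [hdx, map_zero, map_zero, add_zero]
  -- move vcast past d
  rw [vcast_natural (V := V) (fun j => j + 1) d (show k + 1 - 1 = k by ring)]
  rw [smul_smul]
  -- scalar is 1
  have hs : (-1 : ℝ) ^ ((k + 1) * (n - 1)) * (-1 : ℝ) ^ (k + 1) * (-1 : ℝ) ^ ((k + 1) * n)
      = 1 := by
    have hnz : (-1 : ℝ) ≠ 0 := by norm_num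
    rw [← zpow_add₀ hnz, ← zpow_add₀ hnz,
      show (k + 1) * (n - 1) + (k + 1) + (k + 1) * n = 2 * ((k + 1) * n) by ring,
      zpow_mul]
    norm_num
  rw [hs, one_smul]
end
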